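/- For any r' > r > 0 and any integer n ≥ 0, the binomial link maps Meixner polynomials to Meixner polynomials: ∑_{k=0}^l C(l,k)(r/r')^k(1-r/r')^{l-k} · Meix_n(k; c, r) = (r/r')^n · Meix_n(l; c, r') for all l ∈ ℤ_+. -/

import Mathlib

/-!
`Meix c r n` is a linear combination of the falling factorials `x^{↓m}`, `m ≤ n`, and the
binomial link with success probability `p` sends `k^{↓m}` to `p^m l^{↓m}` (the factorial moments
of the binomial distribution). The resulting factors `p^m` are absorbed by replacing `r` with
`r / p`, which is `r'` for `p = r / r'`.
-/

/-- Falling factorial `x^{↓m} = x(x-1)⋯(x-m+1)`. -/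
noncomputable def ffall (x : ℝ) (m : ℕ) : ℝ := ∏ i ∈ Finset.range m, (x - i)

/-- Pochhammer symbol `(c)_m = c(c+1)⋯(c+m-1)`. -/
noncomputable def poch (c : ℝ) (m : ℕ) : ℝ := ∏ i ∈ Finset.range m, (c + i)

/-- The monic Meixner polynomial. -/
noncomputable def Meix (c r : ℝ) (n : ℕ) (x : ℝ) : ℝ :=
  poch c n * ∑ m ∈ Finset.range (n + 1),
    (-r) ^ (n - m) * ffall n m / (poch c m * m.factorial) * ffall x m

open Finset

lemma ffall_natCast (k m : ℕ) : ffall k m = k.descFactorial m := by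
  rw [ffall, ← descPochhammer_eval_eq_prod_range, descPochhammer_eval_eq_descFactorial]

lemma Nat.choose_add_mul_descFactorial (l m j : ℕ) :
    l.choose (m + j) * (m + j).descFactorial m = l.descFactorial m * (l - m).choose j := by
  have h := Nat.choose_mul (n := l) (Nat.le_add_right m j)
  rw [Nat.add_sub_cancel_left] at h
  rw [Nat.descFactorial_eq_factorial_mul_choose, Nat.descFactorial_eq_factorial_mul_choose,
    Nat.mul_left_comm, h, Nat.mul_assoc]

theorem sum_choose_mul_pow_mul_descFactorial {R : Type*} [CommSemiring R] (x y : R) (l m : ℕ) :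
    ∑ k ∈ range (l + 1), (l.choose k : R) * x ^ k * y ^ (l - k) * (k.descFactorial m : R)
      = (l.descFactorial m : R) * x ^ m * (x + y) ^ (l - m) := by
  rcases lt_or_ge l m with hlm | hml
  · rw [Nat.descFactorial_of_lt hlm, Nat.cast_zero, zero_mul, zero_mul]
    refine sum_eq_zero fun k hk => ?_
    rw [Nat.descFactorial_of_lt ((Nat.lt_succ_iff.mp (mem_range.mp hk)).trans_lt hlm),
      Nat.cast_zero, mul_zero]
  obtain ⟨d, rfl⟩ := Nat.exists_eq_add_of_le hml
  have below : ∑ k ∈ range m,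
      ((m + d).choose k : R) * x ^ k * y ^ (m + d - k) * (k.descFactorial m : R) = 0 :=
    sum_eq_zero fun k hk => by
      rw [Nat.descFactorial_of_lt (mem_range.mp hk), Nat.cast_zero, mul_zero]
  rw [add_assoc, sum_range_add, below, zero_add, Nat.add_sub_cancel_left, add_pow, mul_sum]
  refine sum_congr rfl fun j _ => ?_
  have hcast := congrArg (Nat.cast (R := R)) (Nat.choose_add_mul_descFactorial (m + d) m j)
  rw [Nat.add_sub_cancel_left] at hcast
  push_cast at hcast
  rw [Nat.add_sub_add_left, pow_add]
  calc ((m + d).choose (m + j) : R) * (x ^ m * x ^ j) * y ^ (d - j) * ((m + j).descFactorial m : R)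
      = ((m + d).choose (m + j) * (m + j).descFactorial m : R) * x ^ m * (x ^ j * y ^ (d - j)) := by
        ring
    _ = ((m + d).descFactorial m : R) * x ^ m * (x ^ j * y ^ (d - j) * (d.choose j : R)) := by
        rw [hcast]; ring

lemma sum_binomial_mul_ffall (p : ℝ) (l m : ℕ) :
    ∑ k ∈ range (l + 1), (l.choose k : ℝ) * p ^ k * (1 - p) ^ (l - k) * ffall k m
      = p ^ m * ffall l m := by
  simp only [ffall_natCast]
  rw [sum_choose_mul_pow_mul_descFactorial, add_sub_cancel, one_pow, mul_one, mul_comm]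

lemma sum_binomial_mul_Meix (c r : ℝ) {p : ℝ} (hp : p ≠ 0) (n l : ℕ) :
    ∑ k ∈ range (l + 1), (l.choose k : ℝ) * p ^ k * (1 - p) ^ (l - k) * Meix c r n k
      = p ^ n * Meix c (r / p) n l := by
  simp only [Meix, mul_sum]
  rw [sum_comm]
  refine sum_congr rfl fun m hm => ?_
  have hmn : m ≤ n := Nat.lt_succ_iff.mp (mem_range.mp hm)
  have scale : (-r) ^ (n - m) * p ^ m = p ^ n * (-(r / p)) ^ (n - m) := by
    rw [← pow_sub_mul_pow p hmn, mul_right_comm, ← mul_pow, mul_neg, mul_div_cancel₀ _ hp]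
  calc ∑ k ∈ range (l + 1), (l.choose k : ℝ) * p ^ k * (1 - p) ^ (l - k) *
        (poch c n * ((-r) ^ (n - m) * ffall n m / (poch c m * m.factorial) * ffall k m))
      = poch c n * ((-r) ^ (n - m) * ffall n m / (poch c m * m.factorial)) *
        ∑ k ∈ range (l + 1), (l.choose k : ℝ) * p ^ k * (1 - p) ^ (l - k) * ffall k m := by
        rw [mul_sum]; exact sum_congr rfl fun k _ => by ring
    _ = _ := by
        rw [sum_binomial_mul_ffall]
        linear_combination poch c n * ffall n m / (poch c m * m.factorial) * ffall l m * scale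

theorem binomial_link_meixner_general (c : ℝ) (r r' : ℝ) (hr : 0 < r)
    (hrr' : r < r') (n : ℕ) (l : ℕ) :
    ∑ k ∈ Finset.range (l + 1),
        (l.choose k : ℝ) * (r / r') ^ k * (1 - r / r') ^ (l - k) * Meix c r n k
      = (r / r') ^ n * Meix c r' n l := by
  have hr' : r' ≠ 0 := (hr.trans hrr').ne'
  rw [sum_binomial_mul_Meix c r (div_ne_zero hr.ne' hr') n l, div_div_cancel₀ hr.ne']

/-- The binomial link maps Meixner polynomials to Meixner polynomials. -/
theorem binomial_link_meixner (c : ℝ) (hc : 0 < c) (r r' : ℝ) (hr : 0 < r)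
    (hrr' : r < r') (n : ℕ) (l : ℕ) :
    ∑ k ∈ Finset.range (l + 1),
        (l.choose k : ℝ) * (r / r') ^ k * (1 - r / r') ^ (l - k) * Meix c r n k
      = (r / r') ^ n * Meix c r' n l :=
  binomial_link_meixner_general c r r' hr hrr' n l
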